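/- arXiv:2203.15133 — 7 statements merged into one kernel-verified Lean document; each statement's English description precedes it below -/
import Mathlib

section
/- Let A be a local ring with maximal ideal m, and let p, q ∈ A[X] be monic polynomials whose reductions modulo m are coprime in (A/m)[X]. Then the image of p in the quotient ring A[X]/(q) is a unit. -/
/-- If `p, q` are monic over a local ring and their reductions modulo the maximal ideal
are coprime, then the image of `p` in `A[X]/(q)` is a unit. -/
theorem stmt_2 {A : Type*} [CommRing A] [IsLocalRing A] (p q : Polynomial A)
    (hp : p.Monic) (hq : q.Monic)
    (hcop : IsCoprime (p.map (IsLocalRing.residue A)) (q.map (IsLocalRing.residue A))) :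
    IsUnit (Ideal.Quotient.mk (Ideal.span {q}) p) := by
  classical
  set I : Ideal (Polynomial A) := Ideal.span {q} with hI
  haveI : Module.Finite A (AdjoinRoot q) := (AdjoinRoot.powerBasis' hq).finite
  haveI : Module.Finite A (Polynomial A ⧸ I) := ‹Module.Finite A (AdjoinRoot q)›
  haveI : Algebra.IsIntegral A (Polynomial A ⧸ I) := Algebra.IsIntegral.of_finite A _
  obtain ⟨a, b, hab⟩ := hcop
  obtain ⟨a', rfl⟩ := Polynomial.map_surjective _ Ideal.Quotient.mk_surjective a
  obtain ⟨b', rfl⟩ := Polynomial.map_surjective _ Ideal.Quotient.mk_surjective b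
  set r : Polynomial A := a' * p + b' * q - 1 with hr
  have hrmap : r.map (IsLocalRing.residue A) = 0 := by
    simp only [hr, Polynomial.map_sub, Polynomial.map_add, Polynomial.map_mul,
      Polynomial.map_one]
    exact sub_eq_zero.mpr hab
  have hrmem : r ∈ Ideal.map Polynomial.C (IsLocalRing.maximalIdeal A) := by
    rw [Ideal.mem_map_C_iff]
    intro n
    have := congrArg (fun f => Polynomial.coeff f n) hrmap
    simpa [Ideal.Quotient.eq_zero_iff_mem] using this
  have h1 : (Ideal.Quotient.mk I) r ∈
      Ideal.map (algebraMap A (Polynomial A ⧸ I)) (IsLocalRing.maximalIdeal A) := by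
    have heq : Ideal.map (Ideal.Quotient.mk I)
        (Ideal.map Polynomial.C (IsLocalRing.maximalIdeal A))
        = Ideal.map (algebraMap A (Polynomial A ⧸ I)) (IsLocalRing.maximalIdeal A) := by
      rw [Ideal.map_map]; rfl
    exact heq ▸ Ideal.mem_map_of_mem _ hrmem
  have hjac : (Ideal.Quotient.mk I) r ∈ Ideal.jacobson (⊥ : Ideal (Polynomial A ⧸ I)) := by
    rw [Ideal.jacobson, Ideal.mem_sInf]
    rintro J ⟨-, hJ⟩
    refine Ideal.map_le_iff_le_comap.mpr ?_ h1
    haveI := hJ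
    have hmax : (J.comap (algebraMap A (Polynomial A ⧸ I))).IsMaximal :=
      Ideal.isMaximal_comap_of_isIntegral_of_isMaximal J
    exact le_of_eq (IsLocalRing.eq_maximalIdeal hmax).symm
  have hq0 : (Ideal.Quotient.mk I) q = 0 := by
    rw [Ideal.Quotient.eq_zero_iff_mem, hI]
    exact Ideal.subset_span rfl
  have key : (Ideal.Quotient.mk I) a' * (Ideal.Quotient.mk I) p
      = (Ideal.Quotient.mk I) r * 1 + 1 := by
    have := congrArg (Ideal.Quotient.mk I) hr
    simp only [map_sub, map_add, map_mul, map_one, hq0] at this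
    rw [this]; ring
  have hu : IsUnit ((Ideal.Quotient.mk I) a' * (Ideal.Quotient.mk I) p) :=
    key ▸ Ideal.mem_jacobson_bot.mp hjac 1
  exact isUnit_of_mul_isUnit_right hu
end

section
/- Let A be a local ring with maximal ideal m, and let p₁, …, p_r ∈ A[X] be monic polynomials whose reductions modulo m are pairwise coprime in (A/m)[X]. Then the natural ring homomorphism A[X]/(p₁⋯p_r) → ∏ᵢ A[X]/(pᵢ) is an isomorphism. -/
open Polynomial IsLocalRing

/-- Both sides say that the resultant is a unit; the resultant commutes with reduction
because monic polynomials keep their degree. -/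
theorem Polynomial.isCoprime_map_residue_iff {A : Type*} [CommRing A] [IsLocalRing A]
    {p q : A[X]} (hp : p.Monic) (hq : q.Monic) :
    IsCoprime (p.map (residue A)) (q.map (residue A)) ↔ IsCoprime p q := by
  rw [← isUnit_resultant_iff_isCoprime hp, ← isUnit_resultant_iff_isCoprime (hp.map _),
    hp.natDegree_map, hq.natDegree_map, resultant_map_map, isUnit_map_iff]

theorem Ideal.bijective_piRingHom_factor_span_prod {R ι : Type*} [CommRing R] [Fintype ι]
    (f : ι → R) (hf : Pairwise (Function.onFun IsCoprime f)) :
    Function.Bijective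
      (RingHom.pi (fun i =>
        Ideal.Quotient.factor (S := Ideal.span {∏ j, f j}) (T := Ideal.span {f i})
          (Ideal.span_singleton_le_span_singleton.mpr
            (Finset.dvd_prod_of_mem f (Finset.mem_univ i))))) := by
  have hinf : Ideal.span {∏ i, f i} = ⨅ i, Ideal.span {f i} :=
    (Ideal.iInf_span_singleton fun i j hij => hf hij).symm
  have hpair : Pairwise (Function.onFun IsCoprime fun i => Ideal.span {f i}) :=
    fun i j hij => (Ideal.isCoprime_span_singleton_iff _ _).mpr (hf hij)
  convert (Ideal.quotientInfRingEquivPiQuotient _ hpair).bijective.comp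
    (Ideal.quotEquivOfEq hinf).bijective using 1
  ext x
  obtain ⟨y, rfl⟩ := Ideal.Quotient.mk_surjective x
  rfl

/-- CRT for monic polynomials over a local ring whose reductions are pairwise coprime:
the natural map `A[X]/(p₁⋯p_r) → ∏ᵢ A[X]/(pᵢ)` is an isomorphism. -/
theorem stmt_3 {A : Type*} [CommRing A] [IsLocalRing A] {r : ℕ}
    (p : Fin r → Polynomial A) (hmonic : ∀ i, (p i).Monic)
    (hcop : ∀ i j, i ≠ j →
      IsCoprime ((p i).map (IsLocalRing.residue A)) ((p j).map (IsLocalRing.residue A))) :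
    Function.Bijective
      (Pi.ringHom (fun i =>
        Ideal.Quotient.factor (S := Ideal.span {∏ j, p j}) (T := Ideal.span {p i})
          (Ideal.span_singleton_le_span_singleton.mpr
            (Finset.dvd_prod_of_mem p (Finset.mem_univ i))))) :=
  Ideal.bijective_piRingHom_factor_span_prod p fun i j hij =>
    (isCoprime_map_residue_iff (hmonic i) (hmonic j)).mp (hcop i j hij)
end

section
/- Let A be a local ring with maximal ideal m, let V be a finite free A-module, and let g : V → V be an A-linear endomorphism whose characteristic polynomial factors as χ_g = p₁⋯p_r with the pᵢ ∈ A[X] monic and pairwise coprime modulo m. Then V decomposes as the direct sum V = ⊕ᵢ ker(pᵢ(g)), each summand ker(pᵢ(g)) is a finite free A-module, and each summand is g-stable. -/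
/-!
Over a local ring, monic polynomials that are coprime modulo `𝔪` are already coprime: in the
finite `A`-algebra `A[X]/(p)` the ideal `𝔪 A[X]/(p)` lies in the Jacobson radical, so an element
that is invertible modulo `𝔪` is invertible. With the `pᵢ` pairwise coprime and
`∏ pᵢ(g) = χ_g(g) = 0` by Cayley–Hamilton, the usual Bézout argument splits `V` into the
kernels `ker pᵢ(g)`. Each is a direct summand of a finite free module, hence finite and flat,
hence free over the local ring `A`; and it is `g`-stable because `g` commutes with `pᵢ(g)`.
-/

open Polynomial IsLocalRing LinearMap
open scoped Function

theorem IsLocalRing.map_maximalIdeal_le_jacobson_bot {A B : Type*} [CommRing A] [IsLocalRing A]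
    [CommRing B] [Algebra A B] [Algebra.IsIntegral A B] :
    (maximalIdeal A).map (algebraMap A B) ≤ Ideal.jacobson ⊥ := by
  refine le_sInf fun M ⟨_, hM⟩ => Ideal.map_le_iff_le_comap.mpr ?_
  exact (eq_maximalIdeal (Ideal.isMaximal_comap_of_isIntegral_of_isMaximal (R := A) M)).ge

theorem Polynomial.Monic.isCoprime_of_isCoprime_map_residue {A : Type*} [CommRing A]
    [IsLocalRing A] {p q : A[X]} (hp : p.Monic)
    (h : IsCoprime (p.map (residue A)) (q.map (residue A))) : IsCoprime p q := by
  have := hp.finite_adjoinRoot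
  obtain ⟨a', b', hab⟩ := h
  obtain ⟨a, rfl⟩ := map_surjective _ residue_surjective a'
  obtain ⟨b, rfl⟩ := map_surjective _ residue_surjective b'
  have hc : a * p + b * q - 1 ∈ (maximalIdeal A).map (C : A →+* A[X]) := by
    rw [← ker_residue, ← ker_mapRingHom, RingHom.mem_ker]
    simp [hab]
  have hunit : IsUnit (AdjoinRoot.mk p b * AdjoinRoot.mk p q) := by
    have hj : AdjoinRoot.mk p (a * p + b * q - 1) ∈ Ideal.jacobson ⊥ := by
      refine map_maximalIdeal_le_jacobson_bot (A := A) ?_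
      rw [AdjoinRoot.algebraMap_eq, AdjoinRoot.of, ← Ideal.map_map]
      exact Ideal.mem_map_of_mem _ hc
    simpa using Ideal.mem_jacobson_bot.mp hj 1
  obtain ⟨u, hu⟩ := (isUnit_of_mul_isUnit_right hunit).exists_right_inv
  obtain ⟨u, rfl⟩ := AdjoinRoot.mk_surjective u
  obtain ⟨v, hv⟩ := AdjoinRoot.mk_eq_zero.mp (show AdjoinRoot.mk p (q * u - 1) = 0 by simp [hu])
  exact ⟨-v, u, by linear_combination hv⟩

section KernelDecomposition

variable {R M : Type*} [CommRing R] [AddCommGroup M] [Module R M] (f : Module.End R M)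

theorem Polynomial.iSup_ker_aeval_eq_ker_aeval_prod {ι : Type*} [DecidableEq ι] (p : ι → R[X])
    (s : Finset ι) (hp : (s : Set ι).Pairwise (IsCoprime on p)) :
    ⨆ i ∈ s, ker (aeval f (p i)) = ker (aeval f (∏ i ∈ s, p i)) := by
  induction s using Finset.induction_on with
  | empty => simp [Module.End.one_eq_id]
  | @insert a s ha ih =>
    rw [Finset.coe_insert, Set.pairwise_insert] at hp
    rw [Finset.prod_insert ha, Finset.iSup_insert, ih hp.1]
    exact sup_ker_aeval_eq_ker_aeval_mul_of_coprime f <| IsCoprime.prod_right fun j hj =>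
      (hp.2 j hj (ne_of_mem_of_not_mem hj ha).symm).1

theorem Polynomial.isInternal_ker_aeval {ι : Type*} [Fintype ι] [DecidableEq ι] {p : ι → R[X]}
    (hp : Pairwise (IsCoprime on p)) (hf : aeval f (∏ i, p i) = 0) :
    DirectSum.IsInternal fun i => ker (aeval f (p i)) := by
  refine DirectSum.isInternal_submodule_of_iSupIndep_of_iSup_eq_top (fun i => ?_) ?_
  · have h := iSup_ker_aeval_eq_ker_aeval_prod f p (Finset.univ.erase i) (hp.set_pairwise _)
    simp only [Finset.mem_erase, Finset.mem_univ, and_true] at h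
    rw [h]
    exact disjoint_ker_aeval_of_isCoprime f <| IsCoprime.prod_right fun j hj =>
      hp (Finset.ne_of_mem_erase hj).symm
  · simpa [hf] using iSup_ker_aeval_eq_ker_aeval_prod f p Finset.univ (hp.set_pairwise _)

theorem Polynomial.mapsTo_ker_aeval (p : R[X]) :
    Set.MapsTo f (ker (aeval f p)) (ker (aeval f p)) := by
  have hcomm : Commute f (aeval f p) := by simpa using (commute_X p).map (aeval f)
  intro x hx
  rw [SetLike.mem_coe, mem_ker] at hx ⊢
  rw [← Module.End.mul_apply, ← hcomm.eq, Module.End.mul_apply, hx, map_zero]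

end KernelDecomposition

theorem DirectSum.IsInternal.isCompl_iSup_ne {R M ι : Type*} [Ring R] [AddCommGroup M]
    [Module R M] [DecidableEq ι] {N : ι → Submodule R M} (h : DirectSum.IsInternal N) (i : ι) :
    IsCompl (N i) (⨆ (j) (_ : j ≠ i), N j) :=
  ⟨h.submodule_iSupIndep i,
    codisjoint_iff.mpr (by rw [← iSup_split_single, h.submodule_iSup_eq_top])⟩

theorem Submodule.finite_of_isCompl {R M : Type*} [Ring R] [AddCommGroup M] [Module R M]
    [Module.Finite R M] {p q : Submodule R M} (h : IsCompl p q) : Module.Finite R p :=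
  Module.Finite.of_surjective _ (projectionOnto_surjective h)

theorem Submodule.free_of_isCompl {R M : Type*} [CommRing R] [IsLocalRing R] [AddCommGroup M]
    [Module R M] [Module.Finite R M] [Module.Flat R M] {p q : Submodule R M} (h : IsCompl p q) :
    Module.Free R p :=
  have := finite_of_isCompl h
  have := Module.Flat.of_retract p.subtype _ (projectionOnto_comp_subtype h)
  Module.free_of_flat_of_isLocalRing

/-- If the characteristic polynomial of an endomorphism `g` of a finite free module over a
local ring factors as a product of monic polynomials pairwise coprime modulo the maximal
ideal, then the module is the direct sum of the kernels `ker (pᵢ(g))`, each of which is a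
finite free `g`-stable submodule. -/
theorem stmt_4 {A V : Type*} [CommRing A] [IsLocalRing A] [AddCommGroup V] [Module A V]
    [Module.Free A V] [Module.Finite A V] (g : V →ₗ[A] V) {r : ℕ}
    (p : Fin r → Polynomial A) (hmonic : ∀ i, (p i).Monic)
    (hcop : ∀ i j, i ≠ j →
      IsCoprime ((p i).map (IsLocalRing.residue A)) ((p j).map (IsLocalRing.residue A)))
    (hchar : LinearMap.charpoly g = ∏ i, p i) :
    DirectSum.IsInternal (fun i => LinearMap.ker (Polynomial.aeval g (p i))) ∧
    (∀ i, Module.Free A (LinearMap.ker (Polynomial.aeval g (p i))) ∧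
      Module.Finite A (LinearMap.ker (Polynomial.aeval g (p i)))) ∧
    (∀ i, ∀ x ∈ LinearMap.ker (Polynomial.aeval g (p i)),
      g x ∈ LinearMap.ker (Polynomial.aeval g (p i))) := by
  have hinternal : DirectSum.IsInternal fun i => ker (aeval g (p i)) :=
    isInternal_ker_aeval g
      (fun i j hij => (hmonic i).isCoprime_of_isCoprime_map_residue (hcop i j hij))
      (by rw [← hchar, aeval_self_charpoly])
  refine ⟨hinternal, fun i => ⟨?_, ?_⟩, fun i x hx => mapsTo_ker_aeval g (p i) hx⟩
  · exact Submodule.free_of_isCompl (hinternal.isCompl_iSup_ne i)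
  · exact Submodule.finite_of_isCompl (hinternal.isCompl_iSup_ne i)
end

section
/- Let V be a finite-dimensional vector space over a field k, let g : V → V be an invertible linear map, and suppose the characteristic polynomial of g splits over k. Then there exists a polynomial p ∈ k[X] with p(0) = 0 such that t := p(g) is diagonalizable, u := t⁻¹ g is unipotent (i.e., u − 1 is nilpotent), t is invertible, and t and u commute. Moreover t acts on each generalized eigenspace of g for an eigenvalue a as multiplication by a. -/
/-!
Let `S` be the set of eigenvalues of `g` and `N = dim V`. By the Chinese remainder theorem
there is a polynomial `p` with `p ≡ a mod (X - a)^(N+1)` for every `a ∈ S ∪ {0}`; thus `X ∣ p`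
and `t = p(g)` acts as `a` on the generalized eigenspace of `a`. These generalized eigenspaces
span `V` because `χ_g ∣ ∏_{a ∈ S} (X - a)^N`, so `t` is diagonalizable. Since `∏_{a ∈ S} (X - a)`
divides `X - p`, its `N`-th power kills `g - t`, so `g - t` is nilpotent; hence `t` is a unit
(a unit plus a commuting nilpotent) and `u = t⁻¹ g` is unipotent.
-/

open Polynomial Module

namespace Polynomial

variable {k : Type*} [Field k]

theorem exists_X_sub_C_pow_dvd_sub_C (s : Finset k) (n : ℕ) (c : k → k) :
    ∃ p : k[X], ∀ a ∈ s, (X - C a) ^ n ∣ p - C (c a) := by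
  have hcop : Pairwise (Function.onFun IsCoprime fun a : s ↦
      Ideal.span {((X - C (a : k)) ^ n : k[X])}) := by
    intro a b hab
    rw [Function.onFun, Ideal.isCoprime_span_singleton_iff]
    exact (pairwise_coprime_X_sub_C Subtype.val_injective hab).pow
  obtain ⟨p, hp⟩ :=
    Ideal.quotientInfToPiQuotient_surj hcop fun a ↦ Ideal.Quotient.mk _ (C (c a))
  obtain ⟨p, rfl⟩ := Ideal.Quotient.mk_surjective p
  refine ⟨p, fun a ha ↦ ?_⟩
  have hpa := congr_fun hp ⟨a, ha⟩
  rw [Ideal.quotientInfToPiQuotient_mk'] at hpa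
  exact Ideal.mem_span_singleton.mp (Ideal.Quotient.eq.mp hpa)

theorem prod_X_sub_C_dvd {s : Finset k} {q : k[X]} (h : ∀ a ∈ s, X - C a ∣ q) :
    ∏ a ∈ s, (X - C a) ∣ q :=
  Finset.prod_dvd_of_coprime
    (fun _ _ _ _ hab ↦ pairwise_coprime_X_sub_C Function.injective_id hab) h

theorem Splits.dvd_prod_roots_X_sub_C_pow [DecidableEq k] {χ : k[X]} (hsplit : χ.Splits)
    (hmonic : χ.Monic) : χ ∣ (∏ a ∈ χ.roots.toFinset, (X - C a)) ^ χ.natDegree := by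
  conv_lhs => rw [hsplit.eq_prod_roots_of_monic hmonic, Finset.prod_multiset_map_count]
  rw [← Finset.prod_pow]
  refine Finset.prod_dvd_prod_of_dvd _ _ fun a _ ↦ pow_dvd_pow _ ?_
  exact (Multiset.count_le_card _ _).trans χ.card_roots'

theorem pow_sub_aeval_eq_zero {A : Type*} [Ring A] [Algebra k A] {f : A} {s : Finset k} {n : ℕ}
    (hf : aeval f ((∏ a ∈ s, (X - C a)) ^ n) = 0) {p : k[X]} (hp : ∀ a ∈ s, X - C a ∣ p - C a) :
    (f - aeval f p) ^ n = 0 := by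
  have hdvd : ∏ a ∈ s, (X - C a) ∣ X - p := prod_X_sub_C_dvd fun a ha ↦ by
    simpa only [sub_sub_sub_cancel_right] using dvd_sub dvd_rfl (hp a ha)
  obtain ⟨r, hr⟩ := pow_dvd_pow_of_dvd hdvd n
  have hfp : f - aeval f p = aeval f (X - p) := by rw [map_sub, aeval_X]
  rw [hfp, ← map_pow, hr, map_mul, hf, zero_mul]

end Polynomial

namespace Module.End

variable {k V : Type*} [Field k] [AddCommGroup V] [Module k V]

theorem aeval_X_sub_C_pow (f : End k V) (a : k) (n : ℕ) :
    aeval f ((X - C a) ^ n) = (f - a • 1) ^ n := by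
  rw [map_pow, map_sub, aeval_X, aeval_C, algebraMap_end_eq_smul_id]
  rfl

theorem ker_aeval_prod_X_sub_C_pow (f : End k V) (s : Finset k) (n : ℕ) :
    LinearMap.ker (aeval f (∏ a ∈ s, (X - C a) ^ n)) =
      ⨆ a ∈ s, LinearMap.ker ((f - a • 1) ^ n) := by
  classical
  induction s using Finset.induction_on with
  | empty => simp [one_eq_id]
  | insert a s ha ih =>
    have hcop : IsCoprime ((X - C a) ^ n) (∏ b ∈ s, (X - C b) ^ n) :=
      IsCoprime.prod_right fun b hb ↦
        (pairwise_coprime_X_sub_C Function.injective_id (ne_of_mem_of_not_mem hb ha).symm).pow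
    rw [Finset.prod_insert ha, ← sup_ker_aeval_eq_ker_aeval_mul_of_coprime f hcop, ih,
      Finset.iSup_insert, aeval_X_sub_C_pow]

theorem aeval_apply_eq_smul_of_mem_ker_pow {f : End k V} {p : k[X]} {a : k} {n : ℕ}
    (hp : (X - C a) ^ n ∣ p - C a) {x : V} (hx : x ∈ LinearMap.ker ((f - a • 1) ^ n)) :
    aeval f p x = a • x := by
  obtain ⟨r, hr⟩ := hp
  have h : aeval f (p - C a) x = 0 := by
    rw [hr, mul_comm, map_mul, mul_apply, aeval_X_sub_C_pow, LinearMap.mem_ker.mp hx, map_zero]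
  rwa [map_sub, aeval_C, LinearMap.sub_apply, algebraMap_end_apply, sub_eq_zero] at h

theorem ker_sub_smul_one_pow_eq_bot [FiniteDimensional k V] {f : End k V} {a : k}
    (ha : ¬ f.charpoly.IsRoot a) (n : ℕ) : LinearMap.ker ((f - a • 1) ^ n) = ⊥ := by
  rw [← hasEigenvalue_iff_isRoot_charpoly] at ha
  by_contra h
  exact ha <| hasEigenvalue_of_hasGenEigenvalue (k := n) <| by
    rwa [hasGenEigenvalue_iff, genEigenspace_nat]

theorem aeval_prod_roots_charpoly_pow_finrank_eq_zero [DecidableEq k] [FiniteDimensional k V]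
    (f : End k V) (h : f.charpoly.Splits) :
    aeval f ((∏ a ∈ f.charpoly.roots.toFinset, (X - C a)) ^ finrank k V) = 0 := by
  obtain ⟨r, hr⟩ := h.dvd_prod_roots_X_sub_C_pow f.charpoly_monic
  rw [f.charpoly_natDegree] at hr
  rw [hr, map_mul, LinearMap.aeval_self_charpoly, zero_mul]

theorem iSup_ker_pow_finrank_roots_charpoly_eq_top [DecidableEq k] [FiniteDimensional k V]
    (f : End k V) (h : f.charpoly.Splits) :
    ⨆ a ∈ f.charpoly.roots.toFinset, LinearMap.ker ((f - a • 1) ^ finrank k V) = ⊤ := by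
  rw [← ker_aeval_prod_X_sub_C_pow, Finset.prod_pow,
    aeval_prod_roots_charpoly_pow_finrank_eq_zero f h, LinearMap.ker_zero]

end Module.End

open Module.End

/-- Multiplicative Jordan–Chevalley decomposition of an invertible endomorphism of a
finite-dimensional vector space whose characteristic polynomial splits: `g = t * u` with
`t = p(g)` for some polynomial `p` with zero constant term, `t` diagonalizable and
invertible, `u` unipotent, `t` and `u` commuting, and `t` acting on each generalized
eigenspace of `g` for an eigenvalue `a` as multiplication by `a`. -/
theorem stmt_7 {k V : Type*} [Field k] [AddCommGroup V] [Module k V]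
    [FiniteDimensional k V] (g : Module.End k V) (hg : IsUnit g)
    (hsplit : (LinearMap.charpoly g).Splits) :
    ∃ (p : Polynomial k) (t u : Module.End k V),
      p.coeff 0 = 0 ∧
      t = Polynomial.aeval g p ∧
      g = t * u ∧
      IsUnit t ∧
      Commute t u ∧
      (⨆ μ : k, Module.End.eigenspace t μ) = ⊤ ∧
      IsNilpotent (u - 1) ∧
      (∀ a : k, ∀ x ∈ LinearMap.ker ((g - a • (1 : Module.End k V)) ^ Module.finrank k V),
        t x = a • x) := by
  classical
  set N := finrank k V
  set S := g.charpoly.roots.toFinset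
  -- exponent `N + 1` rather than `N`, so that `X ∣ p` also when `V = 0`
  obtain ⟨p, hp⟩ := exists_X_sub_C_pow_dvd_sub_C (insert 0 S) (N + 1) id
  have hpS {m : ℕ} (hm : m ≤ N + 1) (a : k) (ha : a ∈ S) : (X - C a) ^ m ∣ p - C a :=
    (pow_dvd_pow _ hm).trans (hp a (Finset.mem_insert_of_mem ha))
  set t := aeval g p
  have hact (a : k) (x : V) (hx : x ∈ LinearMap.ker ((g - a • 1) ^ N)) : t x = a • x := by
    by_cases ha : a ∈ S
    · exact aeval_apply_eq_smul_of_mem_ker_pow (hpS N.le_succ a ha) hx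
    · rw [ker_sub_smul_one_pow_eq_bot (by simpa [S, g.charpoly_monic.ne_zero] using ha)] at hx
      simp [(Submodule.mem_bot k).mp hx]
  have hnil : IsNilpotent (g - t) :=
    ⟨N, pow_sub_aeval_eq_zero (aeval_prod_roots_charpoly_pow_finrank_eq_zero g hsplit)
      fun a ha ↦ by simpa using hpS (m := 1) (by omega) a ha⟩
  have hcomm : Commute g t := by simpa using (Commute.all X p).map (aeval g)
  have hunit : IsUnit t := by
    simpa using
      hnil.neg.isUnit_add_left_of_commute hg ((Commute.refl g).sub_left hcomm.symm).neg_left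
  refine ⟨p, t, ↑hunit.unit⁻¹ * g, ?_, rfl, ?_, hunit, ?_, ?_, ?_, hact⟩
  · have h0 := hp 0 (Finset.mem_insert_self 0 S)
    rw [id, map_zero, sub_zero, sub_zero] at h0
    exact X_dvd_iff.mp ((dvd_pow_self X N.succ_ne_zero).trans h0)
  · rw [← mul_assoc, hunit.mul_val_inv, one_mul]
  · exact (Commute.refl t).units_inv_right.mul_right hcomm.symm
  · refine eq_top_iff.mpr ((iSup_ker_pow_finrank_roots_charpoly_eq_top g hsplit).ge.trans
      (iSup₂_le fun a _ x hx ↦ ?_))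
    exact Submodule.mem_iSup_of_mem a (mem_eigenspace_iff.mpr (hact a x hx))
  · have hu1 : ↑hunit.unit⁻¹ * g - 1 = ↑hunit.unit⁻¹ * (g - t) := by
      rw [mul_sub, hunit.val_inv_mul]
    rw [hu1]
    exact (Commute.units_inv_left (u := hunit.unit)
      (hcomm.symm.sub_right (Commute.refl t))).isNilpotent_mul_left hnil
end

section
/- Let A be a henselian local ring with maximal ideal m and algebraically closed residue field k, let V be a finite free A-module, and let g : V → V be an invertible A-linear endomorphism. Then there exist invertible A-linear endomorphisms t, u : V → V such that g = t·u, t and u commute, t is a polynomial in g with zero constant term, and the reductions t̄, ū modulo m give the multiplicative Jordan decomposition of ḡ (i.e., t̄ is diagonalizable, ū is unipotent, and ḡ = t̄·ū). -/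
/-!
Over the residue field `k` the Jordan–Chevalley decomposition writes `ḡ = s + n` with `s`
semisimple and a polynomial in `ḡ`; since `ḡ` is invertible, so is `s`, the polynomial can be
chosen with zero constant term, and `ū := s⁻¹ ḡ` is unipotent. Lifting the polynomial to `P` over
`A` gives `t := P(g)`, which reduces to `s`; as `A` is local, `t` is invertible because its
determinant reduces to `det s ≠ 0`, and `u := t⁻¹ g` is the required unipotent part.
-/

open Polynomial

lemma IsNilpotent.of_isUnit_mul {R : Type*} [Ring R] {s x : R} (hs : IsUnit s)
    (hsx : Commute s x) (h : IsNilpotent (s * x)) : IsNilpotent x := by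
  have hcomm : Commute ↑hs.unit⁻¹ (s * x) :=
    ((Commute.refl s).mul_right hsx).units_inv_left (u := hs.unit)
  simpa [← mul_assoc] using hcomm.isNilpotent_mul_left h

lemma IsNilpotent.sub_one_of_mul_sub_self {R : Type*} [Ring R] {s u : R} (hs : IsUnit s)
    (hsu : Commute s u) (h : IsNilpotent (s * u - s)) : IsNilpotent (u - 1) :=
  .of_isUnit_mul hs (hsu.sub_right (Commute.one_right s)) (by rwa [mul_sub, mul_one])

lemma Polynomial.exists_map_eq_of_coeff_zero_eq_zero {R S : Type*} [Semiring R] [Semiring S]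
    {f : R →+* S} (hf : Function.Surjective f) {q : S[X]} (hq : q.coeff 0 = 0) :
    ∃ P : R[X], P.coeff 0 = 0 ∧ P.map f = q := by
  obtain ⟨q₁, rfl⟩ := X_dvd_iff.mpr hq
  obtain ⟨P₁, rfl⟩ := map_surjective f hf q₁
  exact ⟨X * P₁, by simp, by simp⟩

namespace LinearMap

variable {R M : Type*} [CommRing R] [AddCommGroup M] [Module R M]

lemma baseChange_aeval (B : Type*) [CommRing B] [Algebra R B] (f : Module.End R M) (P : R[X]) :
    (aeval f P).baseChange B = aeval (f.baseChange B) (P.map (algebraMap R B)) := by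
  rw [aeval_map_algebraMap]
  exact (aeval_algHom_apply (Module.End.baseChangeHom R B M) f P).symm

lemma isUnit_of_isUnit_baseChange [Module.Free R M] [Module.Finite R M] {B : Type*} [CommRing B]
    [Algebra R B] [IsLocalHom (algebraMap R B)] {f : Module.End R M}
    (hf : IsUnit (f.baseChange B)) : IsUnit f := by
  rw [isUnit_iff_isUnit_det]
  apply isUnit_of_map_unit (algebraMap R B)
  rw [← det_baseChange]
  exact isUnit_det _ hf

end LinearMap

namespace Module.End

variable {K W : Type*} [Field K] [AddCommGroup W] [Module K W] [FiniteDimensional K W]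
  {f : Module.End K W}

lemma minpoly_coeff_zero_ne_zero_of_isUnit (hf : IsUnit f) : (minpoly K f).coeff 0 ≠ 0 := by
  rw [Ne, ← zero_isRoot_iff_coeff_zero_eq_zero]
  exact ((LinearMap.not_hasEigenvalue_zero_tfae f).out 1 3).mpr (LinearMap.isUnit_det f hf).ne_zero

lemma exists_coeff_zero_eq_zero_aeval_eq (hf : IsUnit f) (p : K[X]) :
    ∃ q : K[X], q.coeff 0 = 0 ∧ aeval f q = aeval f p := by
  have hμ := minpoly_coeff_zero_ne_zero_of_isUnit hf
  refine ⟨p - C (p.coeff 0 / (minpoly K f).coeff 0) * minpoly K f, ?_, ?_⟩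
  · simp [div_mul_cancel₀ _ hμ]
  · simp

theorem exists_isUnit_isSemisimple_aeval [PerfectField K] (hf : IsUnit f) :
    ∃ q : K[X], q.coeff 0 = 0 ∧ IsUnit (aeval f q) ∧ (aeval f q).IsSemisimple ∧
      IsNilpotent (f - aeval f q) := by
  obtain ⟨n, -, s, hs, hn, hss, hfns⟩ := exists_isNilpotent_isSemisimple (f := f)
  rw [Algebra.adjoin_singleton_eq_range_aeval, AlgHom.mem_range] at hs
  obtain ⟨p, rfl⟩ := hs
  obtain ⟨q, hq0, hqp⟩ := exists_coeff_zero_eq_zero_aeval_eq hf p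
  have hnil : IsNilpotent (f - aeval f q) := by
    rw [hqp, ← eq_sub_of_add_eq hfns.symm]
    exact hn
  have hcomm : Commute f (aeval f q) := by simpa using (Commute.all X q).map (aeval f)
  refine ⟨q, hq0, ?_, hqp ▸ hss, hnil⟩
  simpa using hnil.neg.isUnit_add_left_of_commute hf ((Commute.refl f).sub_right hcomm).symm.neg_left

end Module.End

open scoped TensorProduct

/-- Relative multiplicative Jordan decomposition over a henselian local ring with
algebraically closed residue field: any invertible endomorphism `g` of a finite free
module factors as `g = t * u` with `t, u` invertible and commuting, `t` a polynomial in
`g` with zero constant term, and the reductions of `t` and `u` modulo the maximal ideal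
giving the multiplicative Jordan decomposition of the reduction of `g`. -/
theorem stmt_8 {A : Type*} [CommRing A] [HenselianLocalRing A]
    [IsAlgClosed (IsLocalRing.ResidueField A)]
    {V : Type*} [AddCommGroup V] [Module A V] [Module.Free A V] [Module.Finite A V]
    (g : Module.End A V) (hg : IsUnit g) :
    ∃ t u : Module.End A V,
      IsUnit t ∧ IsUnit u ∧ g = t * u ∧ Commute t u ∧
      (∃ p : Polynomial A, p.coeff 0 = 0 ∧ t = Polynomial.aeval g p) ∧
      (⨆ μ : IsLocalRing.ResidueField A,
        Module.End.eigenspace (LinearMap.baseChange (IsLocalRing.ResidueField A) t) μ) = ⊤ ∧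
      IsNilpotent (LinearMap.baseChange (IsLocalRing.ResidueField A) u - 1) ∧
      LinearMap.baseChange (IsLocalRing.ResidueField A) g =
        LinearMap.baseChange (IsLocalRing.ResidueField A) t *
          LinearMap.baseChange (IsLocalRing.ResidueField A) u := by
  set k := IsLocalRing.ResidueField A
  -- instance search does not unfold `algebraMap A k` to `IsLocalRing.residue A`
  have : IsLocalHom (algebraMap A k) := inferInstanceAs (IsLocalHom (IsLocalRing.residue A))
  have hg_bar : IsUnit (g.baseChange k) := hg.map (Module.End.baseChangeHom A k V)
  obtain ⟨q, hq0, hsu, hss, hnil⟩ := Module.End.exists_isUnit_isSemisimple_aeval hg_bar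
  obtain ⟨P, hP0, hPq⟩ :=
    Polynomial.exists_map_eq_of_coeff_zero_eq_zero IsLocalRing.residue_surjective hq0
  set t := aeval g P
  have hts : t.baseChange k = aeval (g.baseChange k) q := by
    rw [LinearMap.baseChange_aeval, ← hPq]
    rfl
  rw [← hts] at hsu hss hnil
  have ht : IsUnit t := LinearMap.isUnit_of_isUnit_baseChange hsu
  set u := ↑ht.unit⁻¹ * g
  have hgtu : g = t * u := by rw [← mul_assoc, ht.mul_val_inv, one_mul]
  have htu : Commute t u := by
    have htg : Commute t g := by simpa using (Commute.all P X).map (aeval g)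
    exact (Commute.refl t).units_inv_right (u := ht.unit) |>.mul_right htg
  have hgtu_bar : g.baseChange k = t.baseChange k * u.baseChange k := by
    rw [hgtu, LinearMap.baseChange_mul]
  refine ⟨t, u, ht, (ht.unit⁻¹).isUnit.mul hg, hgtu, htu, ⟨P, hP0, rfl⟩,
    hss.iSup_eigenspace_eq_top, ?_, hgtu_bar⟩
  have htu_bar : Commute (t.baseChange k) (u.baseChange k) :=
    htu.map (Module.End.baseChangeHom A k V)
  rw [hgtu_bar] at hnil
  exact IsNilpotent.sub_one_of_mul_sub_self (R := Module.End k (k ⊗[A] V)) hsu htu_bar hnil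
end

section
/- Let A be a discrete valuation ring with fraction field K, and let L/K be a finite field extension. Then the integral closure B of A in L is a Dedekind domain, and for every maximal ideal q of B, the localization B_q is a discrete valuation ring. -/
/-!
Let `𝔪` be the maximal ideal of `A` and `B` the integral closure. If elements of `B` have images
in `B/𝔪B` linearly independent over `A/𝔪`, they are linearly independent over `A` (divide a
relation by a generator of the ideal of its coefficients), hence over `K`; so `B/𝔪B` has
dimension at most `[L : K]` and is a Noetherian `A`-module. A nonzero prime of `B` meets `A` in a
nonzero prime, i.e. in `𝔪`, so it contains the finitely generated ideal `𝔪B` and is finitely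
generated modulo it; thus `B` is Noetherian. Being integrally closed and integral over `A`, it is
a Dedekind domain, and it is not a field, so its maximal ideals are nonzero and the localizations
at them are discrete valuation rings.
-/

open Submodule

section PrincipalIdealRing

variable {A M : Type*} [CommRing A] [IsDomain A] [IsPrincipalIdealRing A]
  [AddCommGroup M] [Module A M] [Module.IsTorsionFree A M] {p : Ideal A}

theorem LinearIndependent.of_comp_mkQ_smul_top (hp : p ≠ ⊤) {ι : Type*} {v : ι → M}
    (hv : LinearIndependent (A ⧸ p) ((p • ⊤ : Submodule A M).mkQ ∘ v)) :
    LinearIndependent A v := by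
  classical
  rw [linearIndependent_iff']
  intro t g hg j hj
  by_contra hgj
  set d := IsPrincipal.generator (Ideal.span (g '' t))
  have hd : Ideal.span {d} = Ideal.span (g '' t) := IsPrincipal.span_singleton_generator _
  have hd0 : d ≠ 0 := by
    intro h
    rw [h, Ideal.span_singleton_eq_bot.mpr rfl, eq_comm, Ideal.span_eq_bot] at hd
    exact hgj (hd _ ⟨j, hj, rfl⟩)
  have hdvd : ∀ i ∈ t, d ∣ g i := fun i hi =>
    Ideal.mem_span_singleton.mp (hd ▸ Ideal.subset_span ⟨i, hi, rfl⟩)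
  choose! c hc using hdvd
  have hcv : ∑ i ∈ t, c i • v i = 0 := by
    refine (smul_right_injective M hd0).eq_iff.mp ?_
    simp only [Finset.smul_sum, smul_smul, smul_zero]
    rw [← hg]
    exact Finset.sum_congr rfl fun i hi => by rw [← hc i hi]
  have hcp : ∀ i ∈ t, c i ∈ p := by
    have := congrArg (p • ⊤ : Submodule A M).mkQ hcv
    simp only [map_sum, map_zero, LinearMap.map_smul] at this
    intro i hi
    exact Ideal.Quotient.eq_zero_iff_mem.mp <| linearIndependent_iff'.mp hv t
      (fun i => Ideal.Quotient.mk p (c i)) this i hi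
  have : d ∈ Ideal.span {d} * p := by
    refine (?_ : Ideal.span (g '' t) ≤ _) (hd ▸ Ideal.mem_span_singleton_self d)
    rw [Ideal.span_le]
    rintro _ ⟨i, hi, rfl⟩
    exact hc i hi ▸ Ideal.mul_mem_mul (Ideal.mem_span_singleton_self d) (hcp i hi)
  obtain ⟨z, hz, hdz⟩ := Ideal.mem_span_singleton_mul.mp this
  exact hp <| (Ideal.eq_top_iff_one p).mpr <| by
    rwa [← mul_left_cancel₀ hd0 (hdz.trans (mul_one d).symm)]

theorem rank_quotient_smul_top_le (hp : p ≠ ⊤) :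
    Module.rank (A ⧸ p) (M ⧸ p • (⊤ : Submodule A M)) ≤ Module.rank A M := by
  rw [Module.rank]
  refine ciSup_le' fun ⟨s, hs⟩ => ?_
  obtain ⟨v, hv⟩ : ∃ v : s → M, (p • ⊤ : Submodule A M).mkQ ∘ v = (↑) :=
    ⟨Function.surjInv (mkQ_surjective _) ∘ Subtype.val, funext fun _ => Function.surjInv_eq _ _⟩
  exact (LinearIndependent.of_comp_mkQ_smul_top hp (by rw [hv]; exact hs)).cardinal_le_rank

theorem isNoetherian_quotient_smul_top_of_rank_lt_aleph0 [p.IsMaximal]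
    (hM : Module.rank A M < Cardinal.aleph0) : IsNoetherian A (M ⧸ p • (⊤ : Submodule A M)) := by
  let := Ideal.Quotient.field p
  have : Module.Finite (A ⧸ p) (M ⧸ p • (⊤ : Submodule A M)) :=
    Module.rank_lt_aleph0_iff.mp <|
      (rank_quotient_smul_top_le (Ideal.IsMaximal.ne_top ‹_›)).trans_lt hM
  have : Module.Finite A (M ⧸ p • (⊤ : Submodule A M)) := Module.Finite.trans (A ⧸ p) _
  exact isNoetherian_of_isNoetherianRing_of_finite A _

end PrincipalIdealRing

theorem IsDiscreteValuationRing.isNoetherianRing_of_isIntegral {A B : Type*} [CommRing A]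
    [IsDomain A] [IsDiscreteValuationRing A] [CommRing B] [IsDomain B] [Algebra A B]
    [Algebra.IsIntegral A B] [Module.IsTorsionFree A B] (hB : Module.rank A B < Cardinal.aleph0) :
    IsNoetherianRing B := by
  refine IsNoetherianRing.of_prime_ne_bot fun P hP hP0 => ?_
  set 𝔪B := (IsLocalRing.maximalIdeal A).map (algebraMap A B)
  have hle : 𝔪B ≤ P := by
    obtain ⟨x, hxP, hx0⟩ := Submodule.exists_mem_ne_zero_of_ne_bot hP0
    have := (hP.comap (algebraMap A B)).isMaximal
      (Ideal.comap_ne_bot_of_integral_mem hx0 hxP (Algebra.IsIntegral.isIntegral x))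
    exact Ideal.map_le_iff_le_comap.mpr (IsLocalRing.eq_maximalIdeal this).ge
  have : IsNoetherian A (B ⧸ 𝔪B.restrictScalars A) := by
    rw [← Ideal.smul_top_eq_map]
    exact isNoetherian_quotient_smul_top_of_rank_lt_aleph0 hB
  have : IsNoetherian B (B ⧸ 𝔪B) :=
    isNoetherian_of_tower A (isNoetherian_of_linearEquiv (Quotient.restrictScalarsEquiv A 𝔪B))
  refine fg_of_fg_map_of_fg_inf_ker 𝔪B.mkQ (IsNoetherian.noetherian _) ?_
  rw [ker_mkQ, inf_eq_right.mpr hle]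
  exact Ideal.FG.map (IsNoetherian.noetherian _) _

/-- Krull–Akizuki: the integral closure of a DVR in a finite extension of its fraction
field is a Dedekind domain, and its localization at any maximal ideal is a DVR. -/
theorem stmt_10 {A K L : Type*} [CommRing A] [IsDomain A] [IsDiscreteValuationRing A]
    [Field K] [Algebra A K] [IsFractionRing A K]
    [Field L] [Algebra K L] [FiniteDimensional K L]
    [Algebra A L] [IsScalarTower A K L] :
    IsDedekindDomain (integralClosure A L) ∧
    ∀ q : Ideal (integralClosure A L), (hq : q.IsMaximal) →
      letI := hq.isPrime
      IsDiscreteValuationRing (Localization.AtPrime q) := by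
  have : Module.IsTorsionFree A L := .trans_faithfulSMul A K L
  have hrank : Module.rank A (integralClosure A L) < Cardinal.aleph0 :=
    calc Module.rank A (integralClosure A L) ≤ Module.rank A L :=
        Submodule.rank_le (integralClosure A L).toSubmodule
      _ = Module.rank K L := (IsFractionRing.rank_right_eq A K L).symm
      _ < Cardinal.aleph0 := Module.rank_lt_aleph0 K L
  have : IsNoetherianRing (integralClosure A L) :=
    IsDiscreteValuationRing.isNoetherianRing_of_isIntegral hrank
  have : IsIntegrallyClosed (integralClosure A L) :=
    integralClosure.isIntegrallyClosedOfFiniteExtension K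
  have : IsDedekindDomain (integralClosure A L) :=
    { Ring.DimensionLEOne.of_isIntegral A (integralClosure A L) with }
  refine ⟨this, fun q hq => ?_⟩
  have hB : ¬IsField (integralClosure A L) := fun h => IsDiscreteValuationRing.not_isField A <|
    (Algebra.IsIntegral.isField_iff_isField (FaithfulSMul.algebraMap_injective _ _)).mpr h
  exact IsLocalization.AtPrime.isDiscreteValuationRing_of_dedekind_domain _
    (Ring.ne_bot_of_isMaximal_of_not_isField hq hB) _
end

section
/- Let A be a local ring with maximal ideal m, let V be a finite free A-module with decomposition V = ⊕ᵢ₌₁^r Vᵢ into finite free submodules, and let t : V → V act on each Vᵢ as multiplication by a unit cᵢ ∈ A^×, where the residues c̄ᵢ ∈ A/m are pairwise distinct. Then the centralizer of t in End_A(V) equals ∏ᵢ End_A(Vᵢ), i.e., an A-linear endomorphism commutes with t if and only if it preserves each Vᵢ. -/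
/-!
On a summand `Wⱼ` the operator `t - cᵢ` acts as multiplication by `cⱼ - cᵢ`, which is a unit for
`j ≠ i` because the residues differ. Hence the `cᵢ`-eigenspace of `t` is exactly `Wᵢ`, and anything
commuting with `t` preserves its eigenspaces. Conversely, an endomorphism preserving every `Wᵢ`
commutes with `t` on each summand, hence on their sum `V`.
-/

theorem IsLocalRing.isUnit_sub_of_residue_ne {R : Type*} [CommRing R] [IsLocalRing R] {a b : R}
    (h : residue R a ≠ residue R b) : IsUnit (a - b) := by
  rwa [← residue_ne_zero_iff_isUnit, map_sub, sub_ne_zero]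

namespace Module.End

variable {R M ι : Type*} [CommRing R] [AddCommGroup M] [Module R M]
  {W : ι → Submodule R M} {t : End R M} {a : ι → R}

theorem eigenspace_eq_of_isInternal [DecidableEq ι] (hW : DirectSum.IsInternal W)
    (ht : ∀ j, ∀ x ∈ W j, t x = a j • x) (ha : ∀ j i, j ≠ i → IsUnit (a j - a i)) (i : ι) :
    t.eigenspace (a i) = W i := by
  refine le_antisymm (fun x hx ↦ ?_) fun x hx ↦ mem_eigenspace_iff.2 (ht i x hx)
  obtain ⟨f, hfW, rfl⟩ := (Submodule.mem_iSup_iff_exists_finsupp W x).1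
    (hW.submodule_iSup_eq_top ▸ Submodule.mem_top)
  simp only [mem_eigenspace_iff, Finsupp.sum, map_sum] at hx
  have hsum : ∑ j ∈ f.support, (a j - a i) • f j = 0 := by
    simp only [sub_smul, Finset.sum_sub_distrib, ← Finset.smul_sum, ← hx]
    exact sub_eq_zero.2 (Finset.sum_congr rfl fun j _ ↦ (ht j _ (hfW j)).symm)
  have hzero : ∀ j ∈ f.support, (a j - a i) • f j = 0 :=
    (iSupIndep_iff_finsetSum_eq_zero_imp_eq_zero W).1 hW.submodule_iSupIndep f.support _
      (fun j _ ↦ (W j).smul_mem _ (hfW j)) hsum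
  refine Submodule.sum_mem _ fun j hj ↦ ?_
  obtain rfl | hji := eq_or_ne j i
  · exact hfW j
  · rw [(ha j i hji).smul_eq_zero.1 (hzero j hj)]
    exact (W i).zero_mem

theorem commute_of_forall_mem (hW : ⨆ j, W j = ⊤) (ht : ∀ j, ∀ x ∈ W j, t x = a j • x)
    {h : End R M} (hh : ∀ j, ∀ x ∈ W j, h x ∈ W j) : Commute h t := by
  ext x
  refine Submodule.iSup_induction W (motive := fun x ↦ h (t x) = t (h x))
    (hW ▸ Submodule.mem_top) (fun j y hy ↦ ?_) (by simp) fun y z hy hz ↦ by simp [hy, hz]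
  rw [ht j y hy, map_smul, ht j _ (hh j y hy)]

theorem commute_iff_forall_mem_of_isInternal [DecidableEq ι] (hW : DirectSum.IsInternal W)
    (ht : ∀ j, ∀ x ∈ W j, t x = a j • x) (ha : ∀ j i, j ≠ i → IsUnit (a j - a i))
    (h : End R M) : Commute h t ↔ ∀ i, ∀ x ∈ W i, h x ∈ W i := by
  refine ⟨fun hc i ↦ ?_, commute_of_forall_mem hW.submodule_iSup_eq_top ht⟩
  rw [← eigenspace_eq_of_isInternal hW ht ha i]
  exact mapsTo_genEigenspace_of_comm hc.symm (a i) 1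

end Module.End

theorem stmt_16_general {A V : Type*} [CommRing A] [IsLocalRing A] [AddCommGroup V] [Module A V]
    {r : ℕ} (W : Fin r → Submodule A V) (hW : DirectSum.IsInternal W)
    (c : Fin r → Aˣ)
    (hdist : ∀ i j, i ≠ j →
      IsLocalRing.residue A (c i) ≠ IsLocalRing.residue A (c j))
    (t : Module.End A V) (ht : ∀ i, ∀ x ∈ W i, t x = (c i : A) • x)
    (h : Module.End A V) :
    Commute h t ↔ ∀ i, ∀ x ∈ W i, h x ∈ W i :=
  Module.End.commute_iff_forall_mem_of_isInternal hW ht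
    (fun j i hji ↦ IsLocalRing.isUnit_sub_of_residue_ne (hdist j i hji)) h

/-- Let `V = ⊕ᵢ Vᵢ` be a finite free module over a local ring, and let `t` act on each
`Vᵢ` as multiplication by a unit `cᵢ` whose residues are pairwise distinct. Then an
endomorphism commutes with `t` if and only if it preserves each `Vᵢ`; i.e. the
centralizer of `t` is `∏ᵢ End(Vᵢ)`. -/
theorem stmt_16 {A V : Type*} [CommRing A] [IsLocalRing A] [AddCommGroup V] [Module A V]
    [Module.Free A V] [Module.Finite A V]
    {r : ℕ} (W : Fin r → Submodule A V) (hW : DirectSum.IsInternal W)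
    (hfree : ∀ i, Module.Free A (W i)) (hfin : ∀ i, Module.Finite A (W i))
    (c : Fin r → Aˣ)
    (hdist : ∀ i j, i ≠ j →
      IsLocalRing.residue A (c i) ≠ IsLocalRing.residue A (c j))
    (t : Module.End A V) (ht : ∀ i, ∀ x ∈ W i, t x = (c i : A) • x)
    (h : Module.End A V) :
    Commute h t ↔ ∀ i, ∀ x ∈ W i, h x ∈ W i :=
  stmt_16_general W hW c hdist t ht h
end
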